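/- arXiv:1706.04006 — 2 statements merged into one kernel-verified Lean document; each statement's English description precedes it below -/
import Mathlib

section
/- Let L be a lattice (finitely generated free ℤ-module with a symmetric bilinear form) and let e ∈ L be a primitive vector with e² = -2k (k a positive integer) such that (2/2k)·e lies in the dual lattice L^∨ (i.e. e is a 2k-root). Then the index of ⟨e⟩ ⊕ (L ∩ e^⊥) in L is 1 or 2. -/
/-!
Since `(e, L) ⊆ kℤ`, the form `x ↦ (e, x) / k` is an integral linear form taking the value `-2`
at `e`. Its reduction mod 2 is a homomorphism `L → ℤ/2` whose kernel is exactly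
`⟨e⟩ + e^⊥`: if `(e, x) / k = 2m` then `x + m e ∈ e^⊥`. So the index divides `2`.
-/

namespace LinearMap

variable {M : Type*} [AddCommGroup M] [Module ℤ M]

def divOfDvd (f : M →ₗ[ℤ] ℤ) (k : ℤ) (hf : ∀ x, k ∣ f x) : M →ₗ[ℤ] ℤ where
  toFun x := f x / k
  map_add' x y := by rw [map_add, Int.add_ediv_of_dvd_left (hf x)]
  map_smul' n x := by
    rw [f.map_smul, smul_eq_mul, Int.mul_ediv_assoc _ (hf x), RingHom.id_apply, smul_eq_mul]

@[simp]
theorem divOfDvd_apply (f : M →ₗ[ℤ] ℤ) (k : ℤ) (hf : ∀ x, k ∣ f x) (x : M) :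
    f.divOfDvd k hf x = f x / k :=
  rfl

theorem ker_divOfDvd (f : M →ₗ[ℤ] ℤ) {k : ℤ} (hk : k ≠ 0) (hf : ∀ x, k ∣ f x) :
    ker (f.divOfDvd k hf) = ker f := by
  ext x
  obtain ⟨c, hc⟩ := hf x
  simp [hc, hk]

theorem span_singleton_sup_ker_eq_ker_castAddHom_comp {g : M →ₗ[ℤ] ℤ} {e : M} (hge : g e = -2) :
    (Submodule.span ℤ {e} ⊔ ker g).toAddSubgroup =
      ((Int.castAddHom (ZMod 2)).comp g.toAddMonoidHom).ker := by
  ext x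
  simp only [Submodule.mem_toAddSubgroup, AddMonoidHom.mem_ker, AddMonoidHom.comp_apply,
    toAddMonoidHom_coe, Int.coe_castAddHom, ZMod.intCast_zmod_eq_zero_iff_dvd, Nat.cast_ofNat]
  constructor
  · intro hx
    obtain ⟨_, he', z, hz, rfl⟩ := Submodule.mem_sup.mp hx
    obtain ⟨c, rfl⟩ := Submodule.mem_span_singleton.mp he'
    rw [map_add, mem_ker.mp hz, g.map_smul, hge, smul_eq_mul, add_zero]
    exact ⟨-c, by ring⟩
  · rintro ⟨m, hm⟩
    have hz : x + m • e ∈ ker g := by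
      rw [mem_ker, map_add, map_zsmul, hm, hge, smul_eq_mul]
      ring
    rw [show x = (-m) • e + (x + m • e) by rw [neg_zsmul]; abel]
    exact Submodule.add_mem_sup (zsmul_mem (Submodule.mem_span_singleton_self e) (-m)) hz

theorem index_span_singleton_sup_ker_dvd_two {g : M →ₗ[ℤ] ℤ} {e : M} (hge : g e = -2) :
    (Submodule.span ℤ {e} ⊔ ker g).toAddSubgroup.index ∣ 2 := by
  rw [span_singleton_sup_ker_eq_ker_castAddHom_comp hge, AddSubgroup.index_ker]
  simpa using AddSubgroup.card_addSubgroup_dvd_card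
    ((Int.castAddHom (ZMod 2)).comp g.toAddMonoidHom).range

end LinearMap

theorem stmt0_general (M : Type*) [AddCommGroup M] [Module ℤ M]
    (B : M →ₗ[ℤ] M →ₗ[ℤ] ℤ)
    (e : M)
    (k : ℕ) (hk : 0 < k)
    (he : B e e = -(2 * (k : ℤ)))
    (hdual : ∀ x : M, (k : ℤ) ∣ B e x) :
    (Submodule.span ℤ {e} ⊔ LinearMap.ker (B e)).toAddSubgroup.index = 1 ∨
      (Submodule.span ℤ {e} ⊔ LinearMap.ker (B e)).toAddSubgroup.index = 2 := by
  have hk' : (k : ℤ) ≠ 0 := by exact_mod_cast hk.ne'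
  have hge : (B e).divOfDvd k hdual e = -2 := by
    rw [LinearMap.divOfDvd_apply, he, ← neg_mul, Int.mul_ediv_cancel _ hk']
  rw [← LinearMap.ker_divOfDvd (B e) hk' hdual]
  exact Nat.prime_two.eq_one_or_self_of_dvd _ (LinearMap.index_span_singleton_sup_ker_dvd_two hge)

/-- For a lattice `L` (f.g. free ℤ-module with nondegenerate symmetric bilinear form `B`)
and a primitive `2k`-root `e` (i.e. `B e e = -2k` and `(e, L) ⊆ kℤ`), the index of
`⟨e⟩ ⊕ (L ∩ e^⊥)` in `L` is `1` or `2`. -/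
theorem stmt0 (M : Type*) [AddCommGroup M] [Module ℤ M]
    [Module.Finite ℤ M] [Module.Free ℤ M]
    (B : M →ₗ[ℤ] M →ₗ[ℤ] ℤ)
    (hsymm : ∀ x y : M, B x y = B y x)
    (hnondeg : ∀ x : M, (∀ y : M, B x y = 0) → x = 0)
    (e : M)
    (hprim : ∀ (n : ℤ) (v : M), e = n • v → IsUnit n)
    (k : ℕ) (hk : 0 < k)
    (he : B e e = -(2 * (k : ℤ)))
    (hdual : ∀ x : M, (k : ℤ) ∣ B e x) :
    (Submodule.span ℤ {e} ⊔ LinearMap.ker (B e)).toAddSubgroup.index = 1 ∨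
      (Submodule.span ℤ {e} ⊔ LinearMap.ker (B e)).toAddSubgroup.index = 2 :=
  stmt0_general M B e k hk he hdual
end

section
/- There is no primitive vector e = (x, y, z, t) ∈ ℤ⁴ with gcd(x,y,z,t) = 1 satisfying both 2xy − 2z² + 4d't² = −8m and the divisibility conditions 4m | x, 4m | y, 2m | z, where m = p_{i₁}⋯p_{i_s} is a product of distinct odd primes dividing the squarefree odd integer d'. -/
/-! Dividing the equation by 4 leaves `d' t² ≡ 0 (mod 2)`, so `t` is even because `d'` is odd;
the divisibility conditions make `x`, `y`, `z` even as well, contradicting primitivity. -/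

theorem Int.even_of_even_mul_sq_of_odd {d t : ℤ} (hd : Odd d) (h : Even (d * t ^ 2)) :
    Even t := by
  simpa [Int.even_mul, Int.even_pow, Int.not_even_iff_odd.mpr hd] using h

theorem Int.gcd_gcd_gcd_ne_one_of_even {x y z t : ℤ} (hx : Even x) (hy : Even y) (hz : Even z)
    (ht : Even t) : Int.gcd (Int.gcd (Int.gcd x y) z) t ≠ 1 := by
  intro h
  have h2 : (2 : ℤ) ∣ (Int.gcd (Int.gcd (Int.gcd x y) z) t : ℤ) :=
    Int.dvd_coe_gcd (Int.dvd_coe_gcd (Int.dvd_coe_gcd hx.two_dvd hy.two_dvd) hz.two_dvd)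
      ht.two_dvd
  rw [h] at h2
  norm_num at h2

theorem even_mul_sq_of_root {d m x y z t : ℤ}
    (h : 2 * (4 * m * x) * (4 * m * y) - 2 * (2 * m * z) ^ 2 + 4 * d * t ^ 2 = -(8 * m)) :
    Even (d * t ^ 2) :=
  ⟨-m - 4 * m ^ 2 * x * y + m ^ 2 * z ^ 2,
    mul_left_cancel₀ (four_ne_zero (α := ℤ)) (by linear_combination h)⟩

theorem stmt11_general (d' m : ℤ) (hodd : Odd d') :
    ¬∃ x y z t : ℤ,
      Int.gcd (Int.gcd (Int.gcd x y) z) t = 1 ∧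
      2 * x * y - 2 * z ^ 2 + 4 * d' * t ^ 2 = -(8 * m) ∧
      4 * m ∣ x ∧ 4 * m ∣ y ∧ 2 * m ∣ z := by
  rintro ⟨_, _, _, t, hgcd, heq, ⟨x, rfl⟩, ⟨y, rfl⟩, ⟨z, rfl⟩⟩
  have ht : Even t := Int.even_of_even_mul_sq_of_odd hodd (even_mul_sq_of_root heq)
  exact Int.gcd_gcd_gcd_ne_one_of_even ⟨2 * m * x, by ring⟩ ⟨2 * m * y, by ring⟩
    ⟨m * z, by ring⟩ ht hgcd

/-- No primitive vector `(x,y,z,t) ∈ ℤ⁴` satisfies `2xy − 2z² + 4d't² = −8m` together with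
`4m ∣ x`, `4m ∣ y`, `2m ∣ z`, where `m` is a (positive) divisor of the squarefree odd
integer `d'` (i.e. a product of distinct odd primes dividing `d'`). -/
theorem stmt11 (d' m : ℤ) (hodd : Odd d') (hsf : Squarefree d')
    (hm : m ∣ d') (hmpos : 0 < m) :
    ¬∃ x y z t : ℤ,
      Int.gcd (Int.gcd (Int.gcd x y) z) t = 1 ∧
      2 * x * y - 2 * z ^ 2 + 4 * d' * t ^ 2 = -(8 * m) ∧
      4 * m ∣ x ∧ 4 * m ∣ y ∧ 2 * m ∣ z :=
  stmt11_general d' m hodd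
end
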